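/- Let 0 < q < 1 and let λ be real with |λ| < 1. Define D(s) := Σ_{u=1}^s ĥ_{−q}(s−u+1)·F_{q,λ}(u) for integers s ≥ 0 (empty sum for s = 0). Then for every positive integer t, D(t) − D(t−1) = ĥ_{−q}(t) + λ·F_{q,λ}(t); that is, the Riemann–Liouville fractional difference of order q of the discrete Mittag-Leffler function satisfies ∇_1^q F_{q,λ}(t) = ĥ_{−q}(t) + λ·F_{q,λ}(t). -/

import Mathlib

/-- Generalized binomial coefficient `ĥ_α(x) = Γ(x+α)/(Γ(α+1)·Γ(x))`. -/
noncomputable def hhat (α x : ℝ) : ℝ :=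
  Real.Gamma (x + α) / (Real.Gamma (α + 1) * Real.Gamma x)

/-- Discrete Mittag-Leffler function `F_{q,λ}(t) = Σ_m ĥ_{qm}(t)·λ^m` for positive integers
`t` (with `F_{q,λ}(0) = 1`). -/
noncomputable def dML (q lam : ℝ) (t : ℕ) : ℝ :=
  if t = 0 then 1 else ∑' m : ℕ, hhat (q * m) (t : ℝ) * lam ^ m

/-- The fractional sum `D(s) = ∇_1^{−(1−q)} F_{q,λ}(s) = Σ_{u=1}^s ĥ_{−q}(s−u+1)·F_{q,λ}(u)`. -/
noncomputable def fracSumML (q lam : ℝ) (s : ℕ) : ℝ :=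
  ∑ u ∈ Finset.Icc 1 s, hhat (-q) ((s : ℝ) - (u : ℝ) + 1) * dML q lam u

/-! For natural `k`, `ĥ_α(k+1)` is the multiset coefficient `multichoose (α+1) k`, the
`k`-th Taylor coefficient of `(1-x)^(-(α+1))`. The fractional sum of `ĥ_β` is therefore a
Chu–Vandermonde convolution, `Σ_u ĥ_{-q}(s-u+1) ĥ_β(u) = ĥ_{β-q+1}(s)`, and expanding
`F_{q,λ}` termwise gives
`D(s) = Σ_m ĥ_{qm-q+1}(s) λ^m`. Pascal's rule `ĥ_α(t) - ĥ_α(t-1) = ĥ_{α-1}(t)` turns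
`D(t) - D(t-1)` into `Σ_m ĥ_{qm-q}(t) λ^m`, whose `m = 0` term is `ĥ_{-q}(t)` and whose tail is
`λ F_{q,λ}(t)`. All series converge because `ĥ_{qm}(t)` is a polynomial in `m`. -/

open Finset Polynomial

theorem Real.Gamma_add_nat_eq_eval_ascPochhammer_mul {x : ℝ} (hx : ∀ m : ℕ, x ≠ -m)
    (n : ℕ) :
    Real.Gamma (x + n) = (ascPochhammer ℝ n).eval x * Real.Gamma x := by
  induction n with
  | zero => simp
  | succ n ih =>
    have hxn : x + n ≠ 0 := fun h => hx n (by linarith)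
    rw [Nat.cast_succ, ← add_assoc, Real.Gamma_add_one hxn, ih, ascPochhammer_succ_right,
      eval_mul, eval_add, eval_X, eval_natCast]
    ring

theorem Ring.multichoose_eq_eval_ascPochhammer_div {R : Type*} [Field R] [CharZero R] (r : R)
    (k : ℕ) : Ring.multichoose r k = (ascPochhammer R k).eval r / k.factorial := by
  rw [eq_div_iff (by exact_mod_cast k.factorial_ne_zero), mul_comm, ← nsmul_eq_mul,
    Ring.factorial_nsmul_multichoose_eq_ascPochhammer, ascPochhammer_smeval_eq_eval]

theorem Ring.multichoose_add {R : Type*} [CommRing R] [BinomialRing R] (r s : R) (k : ℕ) :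
    Ring.multichoose (r + s) k =
      ∑ ij ∈ antidiagonal k, Ring.multichoose r ij.1 * Ring.multichoose s ij.2 := by
  -- Chu–Vandermonde at `-r`, `-s`, using `choose (-r) n = (-1) ^ n * multichoose r n`.
  have h := Ring.add_choose_eq k (Commute.all (-r) (-s))
  simp only [← neg_add, Ring.choose_neg', Units.smul_def, zsmul_eq_mul, Int.coe_negOnePow,
    Int.natAbs_natCast] at h
  have hsign : ∀ ij ∈ antidiagonal k, (-1) ^ ij.1 * Ring.multichoose r ij.1 *
      ((-1) ^ ij.2 * Ring.multichoose s ij.2) =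
      (-1) ^ k * (Ring.multichoose r ij.1 * Ring.multichoose s ij.2) := fun ij hij => by
    rw [← mem_antidiagonal.1 hij, pow_add]
    ring
  rw [sum_congr rfl hsign, ← mul_sum] at h
  exact ((isUnit_neg_one (α := R)).pow k).mul_left_cancel h

theorem ne_neg_natCast_of_pos {x : ℝ} (hx : 0 < x) (m : ℕ) : x ≠ -m := by
  have := m.cast_nonneg (α := ℝ)
  linarith

theorem hhat_zero_right (α : ℝ) : hhat α 0 = 0 := by
  simp [hhat]

theorem hhat_natCast_add_one {α : ℝ} (hα : ∀ m : ℕ, α + 1 ≠ -m) (k : ℕ) :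
    hhat α (k + 1) = Ring.multichoose (α + 1) k := by
  rw [hhat, show (k : ℝ) + 1 + α = α + 1 + k by ring,
    Real.Gamma_add_nat_eq_eval_ascPochhammer_mul hα, Real.Gamma_nat_eq_factorial,
    Ring.multichoose_eq_eval_ascPochhammer_div, mul_comm (Real.Gamma _),
    mul_div_mul_right _ _ (Real.Gamma_ne_zero hα)]

theorem sum_hhat_mul_hhat {α β : ℝ} (hα : 0 < α + 1) (hβ : 0 < β + 1) (s : ℕ) :
    ∑ u ∈ Icc 1 s, hhat α ((s : ℝ) - u + 1) * hhat β u = hhat (α + β + 1) s := by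
  rcases s with _ | k
  · simp [hhat_zero_right]
  rw [← Ico_add_one_right_eq_Icc, sum_Ico_eq_sum_range, Nat.add_sub_cancel, Nat.cast_succ,
    hhat_natCast_add_one (ne_neg_natCast_of_pos (by linarith)),
    show α + β + 1 + 1 = (β + 1) + (α + 1) by ring, Ring.multichoose_add,
    Nat.sum_antidiagonal_eq_sum_range_succ
      (fun i j => Ring.multichoose (β + 1) i * Ring.multichoose (α + 1) j)]
  refine sum_congr rfl fun j hj => ?_
  have hjk : j ≤ k := Nat.lt_succ_iff.1 (mem_range.1 hj)
  rw [show (k : ℝ) + 1 - ↑(1 + j) + 1 = ↑(k - j) + 1 by push_cast [hjk]; ring,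
    Nat.cast_add, Nat.cast_one, add_comm (1 : ℝ),
    hhat_natCast_add_one (ne_neg_natCast_of_pos hα),
    hhat_natCast_add_one (ne_neg_natCast_of_pos hβ), mul_comm]

theorem hhat_natCast_add_one_sub_hhat {α : ℝ} (hα : 0 < α) (k : ℕ) :
    hhat α (k + 1) - hhat α k = hhat (α - 1) (k + 1) := by
  rw [hhat_natCast_add_one (ne_neg_natCast_of_pos (by linarith)),
    hhat_natCast_add_one (by simpa using ne_neg_natCast_of_pos hα), sub_add_cancel]
  rcases k with _ | k
  · simp [hhat_zero_right]
  · rw [Nat.cast_succ, hhat_natCast_add_one (ne_neg_natCast_of_pos (by linarith)),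
      Ring.multichoose_succ_succ, add_sub_cancel_right]

theorem summable_eval_mul_pow (P : ℝ[X]) {r : ℝ} (hr : |r| < 1) :
    Summable fun m : ℕ => P.eval (m : ℝ) * r ^ m := by
  simp_rw [eval_eq_sum_range, sum_mul, mul_assoc]
  exact summable_sum fun i _ =>
    (summable_pow_mul_geometric_of_norm_lt_one i (by rwa [Real.norm_eq_abs])).mul_left (P.coeff i)

theorem summable_hhat_mul_pow {a r : ℝ} (ha : 0 ≤ a) (hr : |r| < 1) (k : ℕ) :
    Summable fun m : ℕ => hhat (a * m) (k + 1) * r ^ m := by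
  refine (summable_eval_mul_pow
    (C (k.factorial : ℝ)⁻¹ * (ascPochhammer ℝ k).comp (C a * X + 1)) hr).congr fun m => ?_
  rw [hhat_natCast_add_one (ne_neg_natCast_of_pos (by positivity)),
    Ring.multichoose_eq_eval_ascPochhammer_div]
  simp only [eval_mul, eval_C, eval_comp, eval_add, eval_X, eval_one]
  ring

theorem hasSum_dML {q lam : ℝ} (hq : 0 ≤ q) (hlam : |lam| < 1) {t : ℕ} (ht : 1 ≤ t) :
    HasSum (fun m : ℕ => hhat (q * m) t * lam ^ m) (dML q lam t) := by
  obtain ⟨k, rfl⟩ := Nat.exists_eq_add_of_le' ht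
  rw [dML, if_neg k.succ_ne_zero, Nat.cast_succ]
  exact (summable_hhat_mul_pow hq hlam k).hasSum

theorem hasSum_fracSumML {q lam : ℝ} (hq0 : 0 ≤ q) (hq1 : q < 1) (hlam : |lam| < 1) (s : ℕ) :
    HasSum (fun m : ℕ => hhat (q * m - q + 1) s * lam ^ m) (fracSumML q lam s) := by
  refine (hasSum_sum fun u hu =>
    (hasSum_dML hq0 hlam (mem_Icc.1 hu).1).mul_left (hhat (-q) ((s : ℝ) - u + 1))).congr_fun
    fun m => ?_
  simp_rw [← mul_assoc, ← sum_mul]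
  rw [sum_hhat_mul_hhat (by linarith) (by positivity)]
  ring_nf

/-- The Riemann–Liouville fractional difference of order `q` of the discrete Mittag-Leffler
function: `∇_1^q F_{q,λ}(t) = D(t) − D(t−1) = ĥ_{−q}(t) + λ·F_{q,λ}(t)`. -/
theorem frac_diff_dML (q lam : ℝ) (hq0 : 0 < q) (hq1 : q < 1) (hlam : |lam| < 1)
    (t : ℕ) (ht : 1 ≤ t) :
    fracSumML q lam t - fracSumML q lam (t - 1) =
      hhat (-q) (t : ℝ) + lam * dML q lam t := by
  obtain ⟨k, rfl⟩ := Nat.exists_eq_add_of_le' ht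
  rw [Nat.add_sub_cancel]
  have hdiff : HasSum (fun m : ℕ => hhat (q * m - q) (k + 1 : ℕ) * lam ^ m)
      (fracSumML q lam (k + 1) - fracSumML q lam k) := by
    refine ((hasSum_fracSumML hq0.le hq1 hlam (k + 1)).sub
      (hasSum_fracSumML hq0.le hq1 hlam k)).congr_fun fun m => ?_
    rw [← sub_mul, Nat.cast_succ, hhat_natCast_add_one_sub_hhat
      (by linarith [mul_nonneg hq0.le m.cast_nonneg]), add_sub_cancel_right]
  have htail : HasSum (fun m : ℕ => hhat (q * ↑(m + 1) - q) (k + 1 : ℕ) * lam ^ (m + 1))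
      (lam * dML q lam (k + 1)) := by
    refine ((hasSum_dML hq0.le hlam ht).mul_left lam).congr_fun fun m => ?_
    rw [Nat.cast_succ, mul_add_one, add_sub_cancel_right, pow_succ]
    ring
  rw [hdiff.unique ((hasSum_nat_add_iff 1).1 htail), sum_range_one, add_comm]
  simp
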